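/- Let K, q, r be positive integers, let H₀ be a 2K×q real matrix with rank(H₀) ≤ r, and let A > 0 and ε > 0 be reals. Then there exists a finite set S of 2K×q real matrices with card(S) ≤ (8A/ε + 2)^{2Kr} · (8√r(‖H₀‖ + A + ε)/ε + 2)^{qr} such that for every 2K×q real matrix H with rank(H) ≤ r and ‖H − H₀‖ ≤ A, there exists H' ∈ S with ‖H − H'‖ ≤ ε. -/

import Mathlib

/-!
A matrix `H` of rank at most `k` factors as `H = (H C) Cᵀ`, where `C` has `k` orthonormal
columns (`Cᵀ C = 1`) whose span contains the rows of `H`. Then `‖C‖ = √k`, right multiplication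
by `C` does not increase the Frobenius norm and right multiplication by `Cᵀ` preserves it, so
`H C` is close to `H₀ C₀` whenever `C` is close to `C₀`, and `H` is close to `B₀ C₀ᵀ` whenever
moreover `H C` is close to `B₀`. An `ε`-net is therefore formed by the products `B₀ C₀ᵀ`, with
`C₀` running over a net of the `√k`-ball of `n × k` matrices and `B₀` over a net of a ball around
`H₀ C₀`. Each of these nets has at most `(2R/δ + 1)^d` points by the volume comparison of
disjoint balls of radius `δ/2`.
-/

open Matrix

/-- Frobenius norm of a real matrix. -/
noncomputable def frobNorm {m n : ℕ} (M : Matrix (Fin m) (Fin n) ℝ) : ℝ :=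
  Real.sqrt (∑ i, ∑ j, (M i j) ^ 2)

open MeasureTheory Metric Module
open scoped NNReal ENNReal

section Covering

variable {E : Type*} [NormedAddCommGroup E] [NormedSpace ℝ E] [FiniteDimensional ℝ E]

theorem card_le_of_isSeparated_of_subset_closedBall {x : E} {R : ℝ} (hR : 0 ≤ R) {δ : ℝ≥0}
    (hδ : 0 < δ) {T : Finset E} (hT : (T : Set E) ⊆ closedBall x R)
    (hsep : IsSeparated (δ : ℝ≥0∞) (T : Set E)) :
    (T.card : ℝ) ≤ (2 * R / δ + 1) ^ finrank ℝ E := by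
  let _ : MeasurableSpace E := borel E
  have _ : BorelSpace E := ⟨rfl⟩
  set μ : Measure E := Measure.addHaar
  have hρ : (0 : ℝ) < δ / 2 := by positivity
  have hdisj : (T : Set E).PairwiseDisjoint fun t => ball t (δ / 2) := fun s hs t ht hst =>
    ball_disjoint_ball <| by
      have : (δ : ℝ≥0∞) < edist s t := hsep hs ht hst
      rw [edist_dist, ENNReal.coe_nnreal_eq, ENNReal.ofReal_lt_ofReal_iff'] at this
      linarith [this.1]
  have hsub : ⋃ t ∈ T, ball t (δ / 2) ⊆ ball x (R + δ / 2) := by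
    simp only [Set.iUnion_subset_iff]
    intro t ht
    exact ball_subset_ball' (by linarith [mem_closedBall.mp (hT ht)])
  have key : (T.card : ℝ≥0∞) * μ (ball 0 (δ / 2)) ≤ μ (ball x (R + δ / 2)) :=
    calc (T.card : ℝ≥0∞) * μ (ball 0 (δ / 2)) = ∑ t ∈ T, μ (ball t (δ / 2)) := by
          simp [Measure.addHaar_ball_center]
      _ = μ (⋃ t ∈ T, ball t (δ / 2)) :=
          (measure_biUnion_finset hdisj fun _ _ => measurableSet_ball).symm
      _ ≤ μ (ball x (R + δ / 2)) := measure_mono hsub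
  rw [Measure.addHaar_ball_of_pos μ 0 hρ, Measure.addHaar_ball_of_pos μ x (by positivity),
    ← mul_assoc, ENNReal.mul_le_mul_iff_left (measure_ball_pos μ _ one_pos).ne'
      measure_ball_lt_top.ne, ← ENNReal.ofReal_natCast, ← ENNReal.ofReal_mul (by positivity),
    ENNReal.ofReal_le_ofReal_iff (by positivity)] at key
  calc (T.card : ℝ) ≤ (R + δ / 2) ^ finrank ℝ E / (δ / 2) ^ finrank ℝ E := by
        rw [le_div_iff₀ (by positivity)]; exact key
    _ = (2 * R / δ + 1) ^ finrank ℝ E := by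
        rw [← div_pow]; congr 1; field_simp

theorem exists_finset_dist_le_of_mem_closedBall (x : E) {R δ : ℝ} (hR : 0 ≤ R) (hδ : 0 < δ) :
    ∃ T : Finset E, (T.card : ℝ) ≤ (2 * R / δ + 1) ^ finrank ℝ E ∧
      ∀ y ∈ closedBall x R, ∃ t ∈ T, dist y t ≤ δ := by
  set N := ⌊(2 * R / δ + 1) ^ finrank ℝ E⌋₊
  have hδ' : 0 < δ.toNNReal := Real.toNNReal_pos.mpr hδ
  have hcard : ∀ C ⊆ closedBall x R, IsSeparated (δ.toNNReal : ℝ≥0∞) C → C.encard ≤ N := by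
    intro C hC hsep
    by_contra! hlt
    obtain ⟨t, htC, ht⟩ := Set.exists_subset_encard_eq (Order.add_one_le_of_lt hlt)
    have htfin : t.Finite := Set.finite_of_encard_eq_coe ht
    have := card_le_of_isSeparated_of_subset_closedBall hR hδ' (T := htfin.toFinset)
      (by simpa using htC.trans hC) (by simpa using hsep.subset htC)
    rw [Real.coe_toNNReal _ hδ.le, ← Nat.le_floor_iff (by positivity)] at this
    rw [htfin.encard_eq_coe_toFinset_card, ← Nat.cast_one, ← Nat.cast_add] at ht
    have := ENat.natCast_inj.mp ht
    omega
  have hpack : packingNumber δ.toNNReal (closedBall x R) ≤ N :=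
    iSup₂_le fun C hC => iSup_le (hcard C hC)
  have hfin : packingNumber δ.toNNReal (closedBall x R) ≠ ⊤ := (hpack.trans_lt (by simp)).ne
  have hT := (encard_maximalSeparatedSet hfin).trans_le hpack
  have hTfin : (maximalSeparatedSet δ.toNNReal (closedBall x R)).Finite :=
    Set.finite_of_encard_le_coe hT
  refine ⟨hTfin.toFinset, ?_, fun y hy => ?_⟩
  · rw [hTfin.encard_eq_coe_toFinset_card] at hT
    exact (Nat.cast_le.mpr (ENat.natCast_le_natCast.mp hT)).trans (Nat.floor_le (by positivity))
  · obtain ⟨t, ht, hyt⟩ := isCover_maximalSeparatedSet hfin hy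
    exact ⟨t, by simpa using ht, by simpa [edist_dist, hδ.le] using hyt⟩

end Covering

theorem Submodule.exists_le_finrank_eq {K V : Type*} [DivisionRing K] [AddCommGroup V]
    [Module K V] [FiniteDimensional K V] (W : Submodule K V) {n : ℕ} (hWn : finrank K W ≤ n)
    (hn : n ≤ finrank K V) : ∃ W' : Submodule K V, W ≤ W' ∧ finrank K W' = n := by
  induction n, hWn using Nat.le_induction with
  | base => exact ⟨W, le_rfl, rfl⟩
  | succ n _ ih =>
    obtain ⟨W', hWW', hW'⟩ := ih (by omega)
    obtain ⟨v, -, hv⟩ := SetLike.exists_of_lt (Submodule.lt_top_of_finrank_lt_finrank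
      (by rw [hW']; omega : finrank K W' < finrank K V))
    exact ⟨W' ⊔ K ∙ v, hWW'.trans le_sup_left, by rw [finrank_sup_span_singleton hv, hW']⟩

theorem Submodule.exists_orthonormal_sum_inner_smul_eq {𝕜 E : Type*} [RCLike 𝕜]
    [NormedAddCommGroup E] [InnerProductSpace 𝕜 E] [FiniteDimensional 𝕜 E]
    (W : Submodule 𝕜 E) {n : ℕ} (hWn : finrank 𝕜 W ≤ n) (hn : n ≤ finrank 𝕜 E) :
    ∃ b : Fin n → E, Orthonormal 𝕜 b ∧ ∀ x ∈ W, ∑ k, inner 𝕜 (b k) x • b k = x := by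
  obtain ⟨W', hWW', hW'⟩ := W.exists_le_finrank_eq hWn hn
  let b := (stdOrthonormalBasis 𝕜 W').reindex (finCongr hW')
  refine ⟨fun k => b k, b.orthonormal.comp_linearIsometry W'.subtypeₗᵢ, fun x hx => ?_⟩
  simpa using congrArg Subtype.val (b.sum_repr' ⟨x, hWW' hx⟩)

theorem Matrix.exists_transpose_mul_self_eq_one_mul_mul_transpose_eq {m n : Type*} [Fintype m]
    [Fintype n] (H : Matrix m n ℝ) {k : ℕ} (hHk : H.rank ≤ k) (hk : k ≤ Fintype.card n) :
    ∃ C : Matrix n (Fin k) ℝ, Cᵀ * C = 1 ∧ H * C * Cᵀ = H := by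
  let row : m → EuclideanSpace ℝ n := fun i => WithLp.toLp 2 (H i)
  have hrank : finrank ℝ (Submodule.span ℝ (Set.range row)) ≤ k := by
    have hrange : Set.range row = (WithLp.linearEquiv 2 ℝ (n → ℝ)).symm '' Set.range H.row :=
      Set.range_comp _ _
    rw [hrange, ← LinearEquiv.coe_toLinearMap, ← Submodule.map_span, LinearEquiv.finrank_map_eq,
      ← rank_eq_finrank_span_row]
    exact hHk
  obtain ⟨b, hb, hrepr⟩ := Submodule.exists_orthonormal_sum_inner_smul_eq _ hrank
    (by simpa using hk)
  refine ⟨Matrix.of fun j l => b l j, ?_, ?_⟩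
  · ext l l'
    simpa [PiLp.inner_apply, Matrix.mul_apply, Matrix.one_apply, mul_comm] using
      orthonormal_iff_ite.mp hb l l'
  · ext i j
    simpa [PiLp.inner_apply, Matrix.mul_apply] using
      congrArg (· j) (hrepr (row i) (Submodule.subset_span ⟨i, rfl⟩))

attribute [local instance] Matrix.frobeniusNormedAddCommGroup Matrix.frobeniusNormedSpace

theorem frobNorm_eq_norm {m n : ℕ} (M : Matrix (Fin m) (Fin n) ℝ) : frobNorm M = ‖M‖ := by
  rw [frobNorm, frobenius_norm_def, Real.sqrt_eq_rpow]
  simp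

namespace Matrix

variable {m n l : Type*} [Fintype m] [Fintype n] [Fintype l] [DecidableEq l]

theorem frobenius_norm_sq_eq_trace_mul_transpose (X : Matrix m n ℝ) :
    ‖X‖ ^ 2 = trace (X * Xᵀ) := by
  rw [frobenius_norm_def, ← Real.rpow_natCast, ← Real.rpow_mul (by positivity)]
  simp [trace, mul_apply, sq]

variable {C : Matrix n l ℝ}

theorem frobenius_norm_mul_transpose_of_transpose_mul_self_eq_one (hC : Cᵀ * C = 1)
    (X : Matrix m l ℝ) : ‖X * Cᵀ‖ = ‖X‖ := by
  rw [← sq_eq_sq₀ (norm_nonneg _) (norm_nonneg _), frobenius_norm_sq_eq_trace_mul_transpose,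
    frobenius_norm_sq_eq_trace_mul_transpose, transpose_mul, transpose_transpose,
    Matrix.mul_assoc, ← Matrix.mul_assoc Cᵀ, hC, Matrix.one_mul]

theorem frobenius_norm_mul_le_of_transpose_mul_self_eq_one (hC : Cᵀ * C = 1)
    (X : Matrix m n ℝ) : ‖X * C‖ ≤ ‖X‖ := by
  have hpyth : ‖X * C‖ ^ 2 + ‖X - X * C * Cᵀ‖ ^ 2 = ‖X‖ ^ 2 := by
    have : (X - X * C * Cᵀ) * (X - X * C * Cᵀ)ᵀ = X * Xᵀ - X * C * (X * C)ᵀ := by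
      simp only [transpose_sub, transpose_mul, transpose_transpose, Matrix.sub_mul,
        Matrix.mul_sub, Matrix.mul_assoc]
      rw [← Matrix.mul_assoc Cᵀ C, hC, Matrix.one_mul]
      abel
    simp only [frobenius_norm_sq_eq_trace_mul_transpose, this, trace_sub]
    ring
  nlinarith [norm_nonneg (X * C), norm_nonneg X, sq_nonneg ‖X - X * C * Cᵀ‖]

theorem frobenius_norm_eq_sqrt_card_of_transpose_mul_self_eq_one (hC : Cᵀ * C = 1) :
    ‖C‖ = √(Fintype.card l) := by
  rw [← Real.sqrt_sq (norm_nonneg C), frobenius_norm_sq_eq_trace_mul_transpose, trace_mul_comm,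
    hC, trace_one]

theorem frobenius_norm_mul_sub_mul_le (hC : Cᵀ * C = 1) (X X₀ : Matrix m n ℝ)
    (C₀ : Matrix n l ℝ) : ‖X * C - X₀ * C₀‖ ≤ ‖X - X₀‖ + ‖X₀‖ * ‖C - C₀‖ :=
  calc ‖X * C - X₀ * C₀‖ = ‖(X - X₀) * C + X₀ * (C - C₀)‖ := by
        rw [Matrix.sub_mul, Matrix.mul_sub]; abel_nf
    _ ≤ ‖X - X₀‖ + ‖X₀‖ * ‖C - C₀‖ := (norm_add_le _ _).trans <|
        add_le_add (frobenius_norm_mul_le_of_transpose_mul_self_eq_one hC _)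
          (frobenius_norm_mul _ _)

theorem frobenius_norm_mul_transpose_sub_mul_transpose_le (hC : Cᵀ * C = 1)
    (B B₀ : Matrix m l ℝ) (C₀ : Matrix n l ℝ) :
    ‖B * Cᵀ - B₀ * C₀ᵀ‖ ≤ ‖B - B₀‖ + ‖B₀‖ * ‖C - C₀‖ :=
  calc ‖B * Cᵀ - B₀ * C₀ᵀ‖ = ‖(B - B₀) * Cᵀ + B₀ * (C - C₀)ᵀ‖ := by
        rw [transpose_sub, Matrix.sub_mul, Matrix.mul_sub]; abel_nf
    _ ≤ ‖B - B₀‖ + ‖B₀‖ * ‖C - C₀‖ := (norm_add_le _ _).trans <| by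
        rw [frobenius_norm_mul_transpose_of_transpose_mul_self_eq_one hC,
          ← frobenius_norm_transpose (C - C₀)]
        exact add_le_add_right (frobenius_norm_mul _ _) _

theorem frobenius_norm_sub_mul_transpose_le (hC : Cᵀ * C = 1) {H : Matrix m n ℝ}
    (hHC : H * C * Cᵀ = H) (B₀ : Matrix m l ℝ) (C₀ : Matrix n l ℝ) :
    ‖H - B₀ * C₀ᵀ‖ ≤ ‖H * C - B₀‖ + (‖H‖ + ‖H * C - B₀‖) * ‖C - C₀‖ := by
  have hB₀ : ‖B₀‖ ≤ ‖H‖ + ‖H * C - B₀‖ := by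
    rw [norm_sub_rev]
    linarith [norm_le_insert' B₀ (H * C), frobenius_norm_mul_le_of_transpose_mul_self_eq_one hC H]
  calc ‖H - B₀ * C₀ᵀ‖ = ‖H * C * Cᵀ - B₀ * C₀ᵀ‖ := by rw [hHC]
    _ ≤ ‖H * C - B₀‖ + ‖B₀‖ * ‖C - C₀‖ :=
        frobenius_norm_mul_transpose_sub_mul_transpose_le hC _ _ _
    _ ≤ ‖H * C - B₀‖ + (‖H‖ + ‖H * C - B₀‖) * ‖C - C₀‖ := by gcongr

end Matrix

theorem Finset.card_biUnion_image_le {α β γ : Type*} [DecidableEq γ] (s : Finset α)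
    (t : α → Finset β) (f : α → β → γ) {c : ℝ} (ht : ∀ a ∈ s, ((t a).card : ℝ) ≤ c) :
    ((s.biUnion fun a => (t a).image (f a)).card : ℝ) ≤ s.card * c := by
  refine (Nat.cast_le.mpr card_biUnion_le).trans ?_
  rw [Nat.cast_sum, ← nsmul_eq_mul]
  exact sum_le_card_nsmul _ _ _ fun a ha =>
    (Nat.cast_le.mpr card_image_le).trans (ht a ha)

theorem exists_finset_lowRank_cover {m n : Type*} [Fintype m] [Fintype n]
    (H₀ : Matrix m n ℝ) {k : ℕ} (hk : k ≤ Fintype.card n) {A ε : ℝ} (hA : 0 ≤ A) (hε : 0 < ε) :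
    ∃ S : Finset (Matrix m n ℝ),
      (S.card : ℝ) ≤ (8 * A / ε + 2) ^ (Fintype.card m * k) *
          (8 * √k * (‖H₀‖ + A + ε) / ε + 2) ^ (Fintype.card n * k) ∧
      ∀ H : Matrix m n ℝ, H.rank ≤ k → ‖H - H₀‖ ≤ A → ∃ H' ∈ S, ‖H - H'‖ ≤ ε := by
  classical
  set M := ‖H₀‖ + A
  set δ := ε / (4 * (M + ε)) with hδ_def
  have hM : 0 ≤ M := by positivity
  have hδ : 0 < δ := by positivity
  have hMδ : (M + ε) * δ = ε / 4 := by rw [hδ_def]; field_simp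
  have hH₀δ : ‖H₀‖ * δ ≤ ε / 4 := hMδ ▸ mul_le_mul_of_nonneg_right (by linarith) hδ.le
  obtain ⟨NC, hNC, hcovC⟩ :=
    exists_finset_dist_le_of_mem_closedBall (0 : Matrix n (Fin k) ℝ) (Real.sqrt_nonneg k) hδ
  choose NB hNB hcovB using fun C₀ : Matrix n (Fin k) ℝ =>
    exists_finset_dist_le_of_mem_closedBall (H₀ * C₀) (R := A + ‖H₀‖ * δ) (by positivity)
      (half_pos hε)
  simp only [finrank_matrix, Module.finrank_self, Fintype.card_fin, mul_one] at hNC hNB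
  refine ⟨NC.biUnion fun C₀ => (NB C₀).image (· * C₀ᵀ), ?_, fun H hH hHA => ?_⟩
  · have hbaseB : 2 * (A + ‖H₀‖ * δ) / (ε / 2) + 1 ≤ 8 * A / ε + 2 := by
      rw [div_add_one (by positivity), div_add' _ _ _ hε.ne', div_le_div_iff₀ (by positivity) hε]
      nlinarith
    have hbaseC : 2 * √k / δ + 1 ≤ 8 * √k * (M + ε) / ε + 2 := by
      have : 2 * √k / δ = 8 * √k * (M + ε) / ε := by rw [hδ_def]; field_simp; ring
      linarith
    calc _ ≤ NC.card * (2 * (A + ‖H₀‖ * δ) / (ε / 2) + 1) ^ (Fintype.card m * k) :=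
          Finset.card_biUnion_image_le NC NB (fun C₀ => (· * C₀ᵀ)) fun C₀ _ => hNB C₀
      _ ≤ (2 * √k / δ + 1) ^ (Fintype.card n * k) * (8 * A / ε + 2) ^ (Fintype.card m * k) := by
          gcongr
      _ ≤ _ := by rw [mul_comm]; gcongr
  obtain ⟨C, hCC, hHC⟩ := H.exists_transpose_mul_self_eq_one_mul_mul_transpose_eq hH hk
  obtain ⟨C₀, hC₀, hCC₀⟩ := hcovC C (by
    simp [frobenius_norm_eq_sqrt_card_of_transpose_mul_self_eq_one hCC])
  obtain ⟨B₀, hB₀, hBB₀⟩ := hcovB C₀ (H * C) (by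
    rw [mem_closedBall, dist_eq_norm]
    refine (frobenius_norm_mul_sub_mul_le hCC H H₀ C₀).trans ?_
    rw [dist_eq_norm] at hCC₀
    gcongr)
  refine ⟨B₀ * C₀ᵀ, Finset.mem_biUnion.mpr ⟨C₀, hC₀, Finset.mem_image_of_mem _ hB₀⟩, ?_⟩
  rw [dist_eq_norm] at hCC₀ hBB₀
  have hHM : ‖H‖ ≤ M := by linarith [norm_le_insert' H H₀]
  calc ‖H - B₀ * C₀ᵀ‖ ≤ ‖H * C - B₀‖ + (‖H‖ + ‖H * C - B₀‖) * ‖C - C₀‖ :=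
        frobenius_norm_sub_mul_transpose_le hCC hHC B₀ C₀
    _ ≤ ε / 2 + (M + ε) * δ := by gcongr; linarith
    _ ≤ ε := by linarith

theorem covering_number_bound_general (K q r : ℕ)
    (H₀ : Matrix (Fin (2 * K)) (Fin q) ℝ)
    (A ε : ℝ) (hA : 0 < A) (hε : 0 < ε) :
    ∃ S : Finset (Matrix (Fin (2 * K)) (Fin q) ℝ),
      (S.card : ℝ) ≤ (8 * A / ε + 2) ^ (2 * K * r) *
          (8 * Real.sqrt r * (frobNorm H₀ + A + ε) / ε + 2) ^ (q * r) ∧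
      ∀ H : Matrix (Fin (2 * K)) (Fin q) ℝ, H.rank ≤ r → frobNorm (H - H₀) ≤ A →
        ∃ H' ∈ S, frobNorm (H - H') ≤ ε := by
  obtain ⟨S, hS, hcover⟩ :=
    exists_finset_lowRank_cover H₀ (k := min r q) (by simp) hA.le hε
  simp only [Fintype.card_fin] at hS
  refine ⟨S, hS.trans ?_, fun H hH hHA => ?_⟩
  · rw [frobNorm_eq_norm]
    have hkr : min r q ≤ r := min_le_left r q
    have hbase {x : ℝ} (hx : 0 ≤ x) : 1 ≤ x + 2 := by linarith
    calc _ ≤ (8 * A / ε + 2) ^ (2 * K * r) *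
          (8 * √(min r q : ℕ) * (‖H₀‖ + A + ε) / ε + 2) ^ (q * r) := by
          gcongr <;> exact hbase (by positivity)
      _ ≤ _ := by gcongr
  · simp only [frobNorm_eq_norm] at hHA ⊢
    exact hcover H (le_min hH (by simpa using H.rank_le_width)) hHA

/-- Lemma B.3: explicit ε-net bound for
`{H : rank H ≤ r, ‖H − H₀‖ ≤ A}` in `ℝ^{2K×q}`. -/
theorem covering_number_bound (K q r : ℕ) (hK : 0 < K) (hq : 0 < q) (hr : 0 < r)
    (H₀ : Matrix (Fin (2 * K)) (Fin q) ℝ) (hrank : H₀.rank ≤ r)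
    (A ε : ℝ) (hA : 0 < A) (hε : 0 < ε) :
    ∃ S : Finset (Matrix (Fin (2 * K)) (Fin q) ℝ),
      (S.card : ℝ) ≤ (8 * A / ε + 2) ^ (2 * K * r) *
          (8 * Real.sqrt r * (frobNorm H₀ + A + ε) / ε + 2) ^ (q * r) ∧
      ∀ H : Matrix (Fin (2 * K)) (Fin q) ℝ, H.rank ≤ r → frobNorm (H - H₀) ≤ A →
        ∃ H' ∈ S, frobNorm (H - H') ≤ ε :=
  covering_number_bound_general K q r H₀ A ε hA hε
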